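/- arXiv:1602.07714 — 3 statements merged into one kernel-verified Lean document; each statement's English description precedes it below -/
import Mathlib

section
/- Let β ∈ (0,1) and Y, μ₀, ν₀ ∈ ℝ with ν₀ ≥ μ₀², and define μ = (1-β)μ₀ + βY, ν = (1-β)ν₀ + βY², and σ² = ν - μ². Then (Y - μ)² ≤ ((1-β)/β) · σ². Consequently, if σ > 0, then -√((1-β)/β) ≤ (Y - μ)/σ ≤ √((1-β)/β), i.e. the normalized target is bounded by √((1-β)/β) in absolute value, without any assumption on the distribution of the targets. -/
/-- Bounded normalized targets: after updating the normalization statistics,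
the normalized target is bounded by `√((1-β)/β)`, without any assumption on
the distribution of the targets. -/
theorem popart_bounded_normalized_target (β Y μ₀ ν₀ μ ν σ : ℝ)
    (hβ : β ∈ Set.Ioo (0 : ℝ) 1)
    (h0 : ν₀ ≥ μ₀ ^ 2)
    (hμ : μ = (1 - β) * μ₀ + β * Y)
    (hν : ν = (1 - β) * ν₀ + β * Y ^ 2)
    (hσ : σ ^ 2 = ν - μ ^ 2) :
    (Y - μ) ^ 2 ≤ ((1 - β) / β) * σ ^ 2 ∧
      (σ > 0 →
        -Real.sqrt ((1 - β) / β) ≤ (Y - μ) / σ ∧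
          (Y - μ) / σ ≤ Real.sqrt ((1 - β) / β)) := by
  obtain ⟨hb0, hb1⟩ := hβ
  have key : (Y - μ) ^ 2 ≤ ((1 - β) / β) * σ ^ 2 := by
    have e1 : σ ^ 2 = (1 - β) * (ν₀ - μ₀ ^ 2) + β * (1 - β) * (Y - μ₀) ^ 2 := by
      rw [hσ, hν, hμ]; ring
    have e2 : (Y - μ) ^ 2 = (1 - β) ^ 2 * (Y - μ₀) ^ 2 := by rw [hμ]; ring
    rw [div_mul_eq_mul_div, le_div_iff₀ hb0, e1, e2]
    nlinarith [mul_nonneg (mul_nonneg (sub_nonneg.mpr hb1.le) hb0.le) (sub_nonneg.mpr h0), mul_nonneg (sub_nonneg.mpr hb1.le) (sub_nonneg.mpr h0)]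
  refine ⟨key, fun hσpos => ?_⟩
  have h2 : ((Y - μ) / σ) ^ 2 ≤ (1 - β) / β := by
    rw [div_pow, div_le_iff₀ (by positivity)]
    calc (Y - μ) ^ 2 ≤ ((1 - β) / β) * σ ^ 2 := key
    _ = (1 - β) / β * σ ^ 2 := rfl
  have habs : |(Y - μ) / σ| ≤ Real.sqrt ((1 - β) / β) := by
    rw [← Real.sqrt_sq_eq_abs]
    exact Real.sqrt_le_sqrt h2
  exact abs_le.mp habs
end

section
/- Let β ∈ (0,1), s > 0, and Y, μ₀, ν₀ ∈ ℝ with ν₀ ≥ μ₀² and ν₀ > μ₀² or Y ≠ μ₀ (so the scale is positive). Define μ = (1-β)μ₀ + βY, ν = (1-β)ν₀ + βY², and σ = √(ν - μ²)/s. If σ > 0 then -s·√((1-β)/β) ≤ (Y - μ)/σ ≤ s·√((1-β)/β). -/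
/-- Bounded normalized targets with a desired standard deviation `s`:
with scale `σ = √(ν - μ²)/s`, the normalized target is bounded by
`s·√((1-β)/β)` in absolute value. -/
theorem popart_bounded_normalized_target_scaled (β s Y μ₀ ν₀ μ ν σ : ℝ)
    (hβ : β ∈ Set.Ioo (0 : ℝ) 1)
    (hs : s > 0)
    (h0 : ν₀ ≥ μ₀ ^ 2)
    (hpos : ν₀ > μ₀ ^ 2 ∨ Y ≠ μ₀)
    (hμ : μ = (1 - β) * μ₀ + β * Y)
    (hν : ν = (1 - β) * ν₀ + β * Y ^ 2)
    (hσ : σ = Real.sqrt (ν - μ ^ 2) / s) :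
    σ > 0 →
      -(s * Real.sqrt ((1 - β) / β)) ≤ (Y - μ) / σ ∧
        (Y - μ) / σ ≤ s * Real.sqrt ((1 - β) / β) := by
  intro hσpos
  obtain ⟨hβ0, hβ1⟩ := hβ
  have hsqrt : Real.sqrt (ν - μ ^ 2) = σ * s := by
    rw [hσ]; field_simp
  have hsqrtpos : Real.sqrt (ν - μ ^ 2) > 0 := by
    rw [hsqrt]; positivity
  have hA : ν - μ ^ 2 > 0 := Real.sqrt_pos.mp hsqrtpos
  have hx : (0:ℝ) ≤ (1 - β) / β := div_nonneg (by linarith) hβ0.le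
  have hrhs : (s * Real.sqrt ((1 - β) / β)) ^ 2 = s ^ 2 * ((1 - β) / β) := by
    rw [mul_pow, Real.sq_sqrt hx]
  have hσ2 : σ ^ 2 = (ν - μ ^ 2) / s ^ 2 := by
    have : (Real.sqrt (ν - μ ^ 2)) ^ 2 = ν - μ ^ 2 := Real.sq_sqrt (le_of_lt hA)
    rw [hσ, div_pow, this]
  have key : ((Y - μ) / σ) ^ 2 ≤ (s * Real.sqrt ((1 - β) / β)) ^ 2 := by
    rw [hrhs, div_pow, hσ2]
    rw [div_le_iff₀ (by positivity)]
    have h2 : (Y - μ) ^ 2 * β ≤ (ν - μ ^ 2) * (1 - β) := by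
      subst hμ hν
      nlinarith [mul_nonneg (mul_nonneg (sq_nonneg (1-β)) (sub_nonneg.mpr h0)) (le_of_lt hβ0)]
    calc (Y - μ) ^ 2 = ((Y - μ) ^ 2 * β) / β := by field_simp
      _ ≤ ((ν - μ ^ 2) * (1 - β)) / β := by gcongr
      _ = s ^ 2 * ((1 - β) / β) * ((ν - μ ^ 2) / s ^ 2) := by field_simp
  have := abs_le_of_sq_le_sq' key (by positivity)
  exact this
end

section
/- Let h : ℝ^p → ℝ^n → ℝ^m be differentiable in its first argument, let α ∈ ℝ, and let (X_t)_{t≥1} in ℝ^n, (Y_t)_{t≥1} in ℝ^k be input and target sequences, (Σ_t)_{t≥1} a sequence of invertible k×k real matrices with Σ₀ = I, and (μ_t)_{t≥1} vectors in ℝ^k with μ₀ = 0. Define two systems with the same initial θ₀ ∈ ℝ^p, W₀ (k×m matrix), b₀ ∈ ℝ^k. System 1 (Pop-Art SGD): at step t set W̃ = Σ_t⁻¹Σ_{t-1}W¹_{t-1}, b̃ = Σ_t⁻¹(Σ_{t-1} *ᵥ b¹_{t-1} + μ_{t-1} - μ_t), g = h(θ¹_{t-1}, X_t), J = the m×p Jacobian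 of θ ↦ h(θ, X_t) at θ¹_{t-1}, δ̃ = W̃ *ᵥ g + b̃ - Σ_t⁻¹ *ᵥ (Y_t - μ_t), and update θ¹_t = θ¹_{t-1} - α • (Jᵀ *ᵥ (W̃ᵀ *ᵥ δ̃)), W¹_t = W̃ - α • (column δ̃ times row gᵀ), b¹_t = b̃ - α • δ̃. System 2 (Normalized SGD): at step t set g = h(θ²_{t-1}, X_t), J = the Jacobian of θ ↦ h(θ, X_t) at θ²_{t-1}, δ = W²_{t-1} *ᵥ g + b²_{t-1} - Y_t, and update θ²_t = θ²_{t-1} - α • (Jᵀ *ᵥ ((Σ_t⁻¹W²_{t-1})ᵀ *ᵥ (Σ_t⁻¹ *ᵥ δ))), W²_t = W²_{t-1} - α • (δ gᵀ), b²_t = b²_{t-1} - α • δ. Then for all t: (1) θ¹_t = θ²_t, and (2) for every x ∈ ℝ^n, Σ_t *ᵥ (W¹_t *ᵥ h(θ¹_t, x) + b¹_t) + μ_t = W²_t *ᵥ h(θ²_t, x) + b²_t. -/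
open Matrix

lemma mul_vecMulVec_aux {k m : ℕ} (S : Matrix (Fin k) (Fin k) ℝ) (v : Fin k → ℝ)
    (g : Fin m → ℝ) : S * vecMulVec v g = vecMulVec (S *ᵥ v) g := by
  ext i j
  simp [Matrix.mul_apply, vecMulVec, mulVec, dotProduct, Finset.sum_mul, mul_assoc]

/-- Equivalence of Pop-Art SGD (System 1) and Normalized SGD (System 2):
with identical initializations, for any sequence of non-singular scales and
shifts, the lower-layer parameter sequences coincide, and the unnormalized
Pop-Art function coincides with the function learned by Normalized SGD. -/
theorem popart_sgd_eq_normalized_sgd {p n m k : ℕ}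
    (h : (Fin p → ℝ) → (Fin n → ℝ) → (Fin m → ℝ))
    (hdiff : ∀ (θ : Fin p → ℝ) (x : Fin n → ℝ), DifferentiableAt ℝ (fun θ' => h θ' x) θ)
    (α : ℝ)
    (X : ℕ → Fin n → ℝ) (Y : ℕ → Fin k → ℝ)
    (S : ℕ → Matrix (Fin k) (Fin k) ℝ) (μ : ℕ → Fin k → ℝ)
    (hS0 : S 0 = 1) (hμ0 : μ 0 = 0)
    (hSinv : ∀ t, IsUnit (S t))
    (θ₁ θ₂ : ℕ → Fin p → ℝ)
    (W₁ W₂ : ℕ → Matrix (Fin k) (Fin m) ℝ)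
    (b₁ b₂ : ℕ → Fin k → ℝ)
    (hθinit : θ₁ 0 = θ₂ 0) (hWinit : W₁ 0 = W₂ 0) (hbinit : b₁ 0 = b₂ 0)
    -- System 1: Pop-Art SGD
    (hsys1 : ∀ t : ℕ,
      let Wt : Matrix (Fin k) (Fin m) ℝ := (S (t + 1))⁻¹ * S t * W₁ t
      let bt : Fin k → ℝ := (S (t + 1))⁻¹ *ᵥ (S t *ᵥ b₁ t + μ t - μ (t + 1))
      let g : Fin m → ℝ := h (θ₁ t) (X (t + 1))
      let J : Matrix (Fin m) (Fin p) ℝ :=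
        fun i j => fderiv ℝ (fun θ => h θ (X (t + 1)) i) (θ₁ t) (Pi.single j 1)
      let δ : Fin k → ℝ := Wt *ᵥ g + bt - (S (t + 1))⁻¹ *ᵥ (Y (t + 1) - μ (t + 1))
      θ₁ (t + 1) = θ₁ t - α • (Jᵀ *ᵥ (Wtᵀ *ᵥ δ)) ∧
        W₁ (t + 1) = Wt - α • vecMulVec δ g ∧
        b₁ (t + 1) = bt - α • δ)
    -- System 2: Normalized SGD
    (hsys2 : ∀ t : ℕ,
      let g : Fin m → ℝ := h (θ₂ t) (X (t + 1))
      let J : Matrix (Fin m) (Fin p) ℝ :=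
        fun i j => fderiv ℝ (fun θ => h θ (X (t + 1)) i) (θ₂ t) (Pi.single j 1)
      let δ : Fin k → ℝ := W₂ t *ᵥ g + b₂ t - Y (t + 1)
      θ₂ (t + 1) = θ₂ t - α • (Jᵀ *ᵥ (((S (t + 1))⁻¹ * W₂ t)ᵀ *ᵥ ((S (t + 1))⁻¹ *ᵥ δ))) ∧
        W₂ (t + 1) = W₂ t - α • vecMulVec δ g ∧
        b₂ (t + 1) = b₂ t - α • δ) :
    ∀ t : ℕ,
      θ₁ t = θ₂ t ∧
        ∀ x : Fin n → ℝ,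
          S t *ᵥ (W₁ t *ᵥ h (θ₁ t) x + b₁ t) + μ t
            = W₂ t *ᵥ h (θ₂ t) x + b₂ t := by
  have key : ∀ t, θ₁ t = θ₂ t ∧ S t * W₁ t = W₂ t ∧ S t *ᵥ b₁ t + μ t = b₂ t := by
    intro t
    induction t with
    | zero => simp [hS0, hμ0, hθinit, hWinit, hbinit]
    | succ t ih =>
      obtain ⟨hθ, hW, hb⟩ := ih
      have hdet : IsUnit (S (t + 1)).det :=
        (Matrix.isUnit_iff_isUnit_det _).mp (hSinv _)
      have hSA : S (t + 1) * (S (t + 1))⁻¹ = 1 := Matrix.mul_nonsing_inv _ hdet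
      have H1 := hsys1 t
      have H2 := hsys2 t
      simp only at H1 H2
      obtain ⟨h1θ, h1W, h1b⟩ := H1
      obtain ⟨h2θ, h2W, h2b⟩ := H2
      rw [hθ] at h1θ h1W h1b
      set A := (S (t + 1))⁻¹ with hA
      have hWt : A * S t * W₁ t = A * W₂ t := by rw [Matrix.mul_assoc, hW]
      have hbt : A *ᵥ (S t *ᵥ b₁ t + μ t - μ (t + 1)) = A *ᵥ (b₂ t - μ (t + 1)) := by
        rw [hb]
      rw [hWt, hbt] at h1θ h1W h1b
      have hδt : (A * W₂ t) *ᵥ h (θ₂ t) (X (t + 1)) + A *ᵥ (b₂ t - μ (t + 1))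
            - A *ᵥ (Y (t + 1) - μ (t + 1))
          = A *ᵥ (W₂ t *ᵥ h (θ₂ t) (X (t + 1)) + b₂ t - Y (t + 1)) := by
        simp only [Matrix.mulVec_sub, Matrix.mulVec_add, ← Matrix.mulVec_mulVec]
        abel
      rw [hδt] at h1θ h1W h1b
      refine ⟨by rw [h1θ, h2θ], ?_, ?_⟩
      · rw [h1W, h2W, Matrix.mul_sub, ← Matrix.mul_assoc, hSA, Matrix.one_mul,
          Matrix.mul_smul, mul_vecMulVec_aux, Matrix.mulVec_mulVec, hSA,
          Matrix.one_mulVec]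
      · rw [h1b, h2b]
        simp only [Matrix.mulVec_sub, Matrix.mulVec_smul, Matrix.mulVec_mulVec,
          hSA, Matrix.one_mulVec]
        abel
  intro t
  obtain ⟨hθ, hW, hb⟩ := key t
  refine ⟨hθ, fun x => ?_⟩
  rw [Matrix.mulVec_add, Matrix.mulVec_mulVec, hW, hθ, add_assoc, hb]
end
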